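/- Let i, j ∈ I with a(i,j) = −1 and m ∈ ℤ. Then in K_t(A): y(i,m+1) z(i; j,m+1) = t^{−1} z(i; j,m+1) y(i,m+1) and z(i; j,m) y(i,m+2) = t^{−1} y(i,m+2) z(i; j,m). -/
import Mathlib


noncomputable section

/-- The base field `F = ℂ(s)`, rational functions over `ℂ` in one variable `s`. -/
abbrev F : Type := RatFunc ℂ

/-- `t^{1/2} := s`. -/
def tHalf : F := RatFunc.X

/-- `t := s^2`. -/
def tq : F := RatFunc.X ^ 2

/-- `A = (a i j)` is the Cartan matrix of a finite-dimensional simply-laced simple Lie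
algebra of type ADE: a symmetric positive-definite integer matrix with diagonal entries `2`
and off-diagonal entries in `{0, -1}`. -/
def IsCartanADE {I : Type} [Fintype I] (a : I → I → ℤ) : Prop :=
  (∀ i, a i i = 2) ∧ (∀ i j, a i j = a j i) ∧
    (∀ i j, i ≠ j → a i j = 0 ∨ a i j = -1) ∧
    Matrix.PosDef (Matrix.of fun i j : I => (a i j : ℝ))

variable {I : Type} [Fintype I] [DecidableEq I]

/-- The generator `y(i,m)` of the free algebra. -/
def X (i : I) (m : ℤ) : FreeAlgebra F (I × ℤ) := FreeAlgebra.ι F (i, m)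

/-- The defining relations (a), (b), (c) of the quantum Grothendieck ring `K_t(A)`:
(a) quantum Serre relations in each copy, (b) `t`-boson relations between adjacent
copies, (c) `t`-commutation relations between non-adjacent copies. -/
inductive KtRel (a : I → I → ℤ) :
    FreeAlgebra F (I × ℤ) → FreeAlgebra F (I × ℤ) → Prop
  | comm0 {i j : I} {m : ℤ} (h : a i j = 0) :
      KtRel a (X i m * X j m) (X j m * X i m)
  | serre {i j : I} {m : ℤ} (h : a i j = -1) :
      KtRel a (X i m ^ 2 * X j m + X j m * X i m ^ 2)
        ((tq + tq⁻¹) • (X i m * X j m * X i m))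
  | boson (i j : I) (m : ℤ) :
      KtRel a (X i m * X j (m + 1))
        ((tq ^ (a i j)) • (X j (m + 1) * X i m)
          + (if i = j then ((1 : F) - tq ^ 2) • (1 : FreeAlgebra F (I × ℤ)) else 0))
  | tcomm {i j : I} {m p : ℤ} (h : p > m + 1) :
      KtRel a (X i m * X j p)
        ((tq ^ ((((-1 : ℤˣ) ^ (p - m + 1) : ℤˣ) : ℤ) * a i j)) • (X j p * X i m))

/-- The quantum Grothendieck ring `K_t(A)`. -/
abbrev Kt (a : I → I → ℤ) := RingQuot (KtRel a)

/-- The generators `y(i,m)` of `K_t(A)`. -/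
def y (a : I → I → ℤ) (i : I) (m : ℤ) : Kt a :=
  RingQuot.mkAlgHom F (KtRel a) (X i m)

/-- `z(i; j, m) := (t^{1/2} y(j,m) y(i,m) − t^{−1/2} y(i,m) y(j,m)) / (t − t^{−1})`. -/
def z (a : I → I → ℤ) (i j : I) (m : ℤ) : Kt a :=
  (tq - tq⁻¹)⁻¹ • (tHalf • (y a j m * y a i m) - tHalf⁻¹ • (y a i m * y a j m))

/-- `T` satisfies the defining formulas of the braid-group generator `T_i` on `K_t(A)`:
`T(y(j,m)) = y(j, m + δ_{ij})` if `a i j ≠ -1`, and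
`T(y(j,m)) = (t^{1/2} y(j,m) y(i,m) − t^{−1/2} y(i,m) y(j,m)) / (t − t^{−1})`
if `a i j = -1`. -/
def TiFormula (a : I → I → ℤ) (i : I) (T : Kt a → Kt a) : Prop :=
  ∀ (j : I) (m : ℤ),
    T (y a j m) =
      if a i j = -1 then z a i j m else y a j (m + if i = j then 1 else 0)

/-- `T` satisfies the defining formulas of the inverse braid-group generator `T_i'`:
`T(y(j,m)) = y(j, m − δ_{ij})` if `a i j ≠ -1`, and
`T(y(j,m)) = (t^{1/2} y(i,m) y(j,m) − t^{−1/2} y(j,m) y(i,m)) / (t − t^{−1})`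
if `a i j = -1`. -/
def TiInvFormula (a : I → I → ℤ) (i : I) (T : Kt a → Kt a) : Prop :=
  ∀ (j : I) (m : ℤ),
    T (y a j m) =
      if a i j = -1 then
        (tq - tq⁻¹)⁻¹ • (tHalf • (y a i m * y a j m) - tHalf⁻¹ • (y a j m * y a i m))
      else y a j (m - if i = j then 1 else 0)

section Aux

lemma tq_sub_inv_ne_zero : (tq - tq⁻¹ : F) ≠ 0 := by
  have hX : (RatFunc.X : F) ≠ 0 := RatFunc.X_ne_zero
  have h4 : (RatFunc.X : F) ^ 4 ≠ 1 := by
    intro h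
    have h' : (Polynomial.X : Polynomial ℂ) ^ 4 = 1 := by
      apply RatFunc.algebraMap_injective ℂ
      rw [map_pow, map_one, RatFunc.algebraMap_X]
      exact h
    have := congrArg Polynomial.natDegree h'
    simp at this
  intro h
  have htq : (tq : F) ≠ 0 := by simpa [tq] using pow_ne_zero 2 hX
  have h2 : tq = (tq⁻¹ : F) := by linear_combination h
  apply h4
  calc (RatFunc.X : F) ^ 4 = tq * tq := by rw [tq]; ring
  _ = tq * tq⁻¹ := by rw [← h2]
  _ = 1 := mul_inv_cancel₀ htq

variable {I : Type} [Fintype I] [DecidableEq I]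

set_option linter.unusedSectionVars false

lemma serre_rel (a : I → I → ℤ) {i j : I} (hij : a i j = -1) (m : ℤ) :
    y a i m * y a i m * y a j m + y a j m * (y a i m * y a i m)
      = (tq + tq⁻¹) • (y a i m * y a j m * y a i m) := by
  have h := RingQuot.mkAlgHom_rel F (KtRel.serre (m := m) hij)
  simpa [y, sq, map_mul, map_add, map_smul, map_pow, mul_assoc] using h

lemma tcomm_rel (a : I → I → ℤ) (k l : I) (m : ℤ) :
    y a k m * y a l (m + 2) = (tq ^ (-(a k l))) • (y a l (m + 2) * y a k m) := by
  have h := RingQuot.mkAlgHom_rel F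
    (KtRel.tcomm (a := a) (i := k) (j := l) (m := m) (p := m + 2) (by omega))
  have h3 : ((-1 : ℤˣ) ^ (m + 2 - m + 1) : ℤˣ) = -1 := by
    have he : m + 2 - m + 1 = (3 : ℤ) := by ring
    rw [he]; decide
  rw [h3] at h
  have h4 : (((-1 : ℤˣ) : ℤ)) * a k l = -(a k l) := by simp
  rw [h4] at h
  simpa [y, map_mul, map_smul] using h

lemma combo1 {M : Type} [AddCommGroup M] [Module F M] (p q : M) (α β γ δ ε : F)
    (h1 : α - β * γ = -ε) (h2 : β = δ) :
    α • p - β • (γ • p - q) = δ • q - ε • p := by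
  calc α • p - β • (γ • p - q) = (α - β * γ) • p + β • q := by
        rw [smul_sub, smul_smul, sub_smul]; abel
  _ = (-ε) • p + δ • q := by rw [h1, h2]
  _ = δ • q - ε • p := by rw [neg_smul]; abel

lemma combo2 {M : Type} [AddCommGroup M] [Module F M] (p q : M) (α β κ l δ ε : F)
    (h1 : α * κ = δ) (h2 : β * l = ε) :
    α • (κ • p) - β • (l • q) = δ • p - ε • q := by
  rw [smul_smul, smul_smul, h1, h2]

end Aux
/-- for `a i j = -1`,
`y(i,m+1) z(i;j,m+1) = t⁻¹ z(i;j,m+1) y(i,m+1)` and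
`z(i;j,m) y(i,m+2) = t⁻¹ y(i,m+2) z(i;j,m)`. -/
theorem statement14 {I : Type} [Fintype I] [DecidableEq I] (a : I → I → ℤ)
    (hA : IsCartanADE a) (i j : I) (hij : a i j = -1) (m : ℤ) :
    (y a i (m + 1) * z a i j (m + 1)
        = tq⁻¹ • (z a i j (m + 1) * y a i (m + 1))) ∧
    (z a i j m * y a i (m + 2) = tq⁻¹ • (y a i (m + 2) * z a i j m)) := by
  obtain ⟨hdiag, hsym, hoff, hpos⟩ := hA
  have hX : (RatFunc.X : F) ≠ 0 := RatFunc.X_ne_zero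
  have hd : (tq - tq⁻¹ : F) ≠ 0 := tq_sub_inv_ne_zero
  have hd' : ((RatFunc.X : F) ^ 2 - ((RatFunc.X : F) ^ 2)⁻¹) ≠ 0 := by
    simpa [tq] using hd
  constructor
  · have key : y a i (m+1) * (y a i (m+1) * y a j (m+1))
        = (tq + tq⁻¹) • (y a i (m+1) * (y a j (m+1) * y a i (m+1)))
          - y a j (m+1) * (y a i (m+1) * y a i (m+1)) := by
      have h := serre_rel a hij (m + 1)
      rw [← mul_assoc, ← mul_assoc]
      linear_combination (norm := noncomm_ring) h
    unfold z
    simp only [smul_sub, smul_smul, mul_smul_comm, smul_mul_assoc, mul_sub, sub_mul,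
      mul_assoc]
    rw [key]
    apply combo1
    · generalize (tq - tq⁻¹)⁻¹ = c
      simp only [tq, tHalf]
      field_simp
      ring
    · generalize (tq - tq⁻¹)⁻¹ = c
      simp only [tq, tHalf]
      field_simp
  · have hcu : y a i m * y a i (m + 2) = (tq ^ (-2 : ℤ)) • (y a i (m + 2) * y a i m) := by
      have h := tcomm_rel a i i m
      rw [hdiag i] at h
      exact h
    have hcv : y a j m * y a i (m + 2) = tq • (y a i (m + 2) * y a j m) := by
      have h := tcomm_rel a j i m
      rw [hsym j i, hij] at h
      simpa using h
    have h1 : y a j m * (y a i m * y a i (m + 2))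
        = (tq ^ (-2 : ℤ) * tq) • (y a i (m + 2) * (y a j m * y a i m)) := by
      rw [hcu, mul_smul_comm, ← mul_assoc, hcv, smul_mul_assoc, smul_smul, mul_assoc]
    have h2 : y a i m * (y a j m * y a i (m + 2))
        = (tq * tq ^ (-2 : ℤ)) • (y a i (m + 2) * (y a i m * y a j m)) := by
      rw [hcv, mul_smul_comm, ← mul_assoc, hcu, smul_mul_assoc, smul_smul, mul_assoc]
    have htq : (tq : F) ≠ 0 := by
      simpa [tq] using pow_ne_zero 2 hX
    have hco : (tq ^ (-2 : ℤ) * tq : F) = tq⁻¹ := by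
      rw [show (-2 : ℤ) = -(2 : ℤ) from rfl, zpow_neg, zpow_two]
      field_simp
    have h1' : y a j m * (y a i m * y a i (m + 2))
        = tq⁻¹ • (y a i (m + 2) * (y a j m * y a i m)) := by rw [h1, hco]
    have h2' : y a i m * (y a j m * y a i (m + 2))
        = tq⁻¹ • (y a i (m + 2) * (y a i m * y a j m)) := by
      rw [h2, mul_comm tq, hco]
    unfold z
    simp only [smul_sub, smul_smul, mul_smul_comm, smul_mul_assoc, mul_sub, sub_mul,
      mul_assoc]
    rw [h1', h2', smul_smul, smul_smul,
      show ((tq - tq⁻¹)⁻¹ * tHalf * tq⁻¹ : F) = tq⁻¹ * ((tq - tq⁻¹)⁻¹ * tHalf) from by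
        ring,
      show ((tq - tq⁻¹)⁻¹ * tHalf⁻¹ * tq⁻¹ : F) = tq⁻¹ * ((tq - tq⁻¹)⁻¹ * tHalf⁻¹) from by
        ring]
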